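/- arXiv:1611.06189 — 10 statements merged into one kernel-verified Lean document; each statement's English description precedes it below -/
import Mathlib

section
/- Let T = (V, ≻) be a tournament on n vertices and let v ∈ V be a vertex whose out-degree (the number of u ∈ V with v ≻ u) is strictly less than (n−1)/2. Then v does not belong to the Slater set of T. -/
open scoped Classical

variable {V : Type*}

/-- A tournament: an irreflexive relation such that for distinct `u, v`
exactly one of `r u v` and `r v u` holds. -/
def IsTournament (r : V → V → Prop) : Prop :=
  (∀ v, ¬ r v v) ∧ ∀ u v : V, u ≠ v → (r u v ↔ ¬ r v u)

/-- The Slater score of a strict order `s` w.r.t. the dominance relation `r`: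
the number of ordered pairs `(x, y)` with `x > y` (i.e. `s x y`) and `x ≻ y` (i.e. `r x y`). -/
noncomputable def slaterScore (r s : V → V → Prop) : ℕ :=
  {p : V × V | s p.1 p.2 ∧ r p.1 p.2}.ncard

/-- `s` is a Slater order for the tournament `r`: a strict total order of maximum Slater score. -/
def IsSlaterOrder (r s : V → V → Prop) : Prop :=
  IsStrictTotalOrder V s ∧
    ∀ s' : V → V → Prop, IsStrictTotalOrder V s' → slaterScore r s' ≤ slaterScore r s

/-- The Slater set: maximum elements of Slater orders. -/
def slaterSet (r : V → V → Prop) : Set V :=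
  {m | ∃ s : V → V → Prop, IsSlaterOrder r s ∧ ∀ x, x ≠ m → s m x}

/-!
If `v` is the top of a Slater order `s`, move it to the bottom. The pairs not involving `v`
contribute the same to both scores; the pairs involving `v` contribute the out-degree of `v`
to the score of `s` and its in-degree to the score of the new order. In a tournament these two
add up to `n - 1`, so an out-degree below `(n - 1) / 2` means the new order scores strictly
more, contradicting the maximality of `s`.
-/

theorem IsTournament.ncard_out_add_ncard_in [Finite V] {r : V → V → Prop} (hT : IsTournament r)
    (v : V) : {u | r v u}.ncard + {u | r u v}.ncard = Nat.card V - 1 := by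
  have hdisj : Disjoint {u | r v u} {u | r u v} := by
    refine Set.disjoint_left.mpr fun u hvu huv => ?_
    obtain rfl | hne := eq_or_ne u v
    · exact hT.1 u hvu
    · exact (hT.2 u v hne).1 huv hvu
  have hunion : {u | r v u} ∪ {u | r u v} = {v}ᶜ := by
    ext u
    obtain rfl | hne := eq_or_ne u v
    · simpa using hT.1 u
    · simpa [hne] using (em (r v u)).imp_right (hT.2 u v hne).2
  rw [← Set.ncard_union_eq hdisj, hunion, Set.ncard_compl, Set.ncard_singleton]

def moveToBottom (s : V → V → Prop) (v : V) : V → V → Prop :=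
  fun x y => x ≠ v ∧ (y = v ∨ s x y)

theorem isStrictTotalOrder_moveToBottom {s : V → V → Prop} (hs : IsStrictTotalOrder V s)
    (v : V) : IsStrictTotalOrder V (moveToBottom s v) where
  irrefl a h := h.2.elim h.1 (irrefl a)
  trans a b c hab hbc :=
    ⟨hab.1, hbc.2.imp_right fun hbc' => _root_.trans (hab.2.resolve_left hbc.1) hbc'⟩
  trichotomous a b hab hba := by
    unfold moveToBottom at hab hba
    rcases trichotomous_of s a b with h | h | h <;> grind

noncomputable def slaterScoreAvoiding (r s : V → V → Prop) (v : V) : ℕ :=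
  {p : V × V | p.1 ≠ v ∧ p.2 ≠ v ∧ s p.1 p.2 ∧ r p.1 p.2}.ncard

theorem slaterScore_eq_of_top [Finite V] {r s : V → V → Prop} [IsStrictOrder V s] {v : V}
    (hv : ¬ r v v) (htop : ∀ x, x ≠ v → s v x) :
    slaterScore r s = {u | r v u}.ncard + slaterScoreAvoiding r s v := by
  have hsplit : {p : V × V | s p.1 p.2 ∧ r p.1 p.2} = Prod.mk v '' {u | r v u} ∪
      {p : V × V | p.1 ≠ v ∧ p.2 ≠ v ∧ s p.1 p.2 ∧ r p.1 p.2} := by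
    ext ⟨x, y⟩
    simp only [Set.mem_ofPred_eq, Set.mem_union, Set.mem_image, Prod.mk.injEq]
    constructor
    · rintro ⟨hxy, hxy'⟩
      obtain rfl | hx := eq_or_ne x v
      · exact .inl ⟨y, hxy', rfl, rfl⟩
      · exact .inr ⟨hx, fun hy => asymm hxy (hy ▸ htop x hx), hxy, hxy'⟩
    · rintro (⟨u, hu, rfl, rfl⟩ | ⟨-, -, hxy, hxy'⟩)
      · exact ⟨htop u fun h => hv (h ▸ hu), hu⟩
      · exact ⟨hxy, hxy'⟩
  rw [slaterScore, hsplit, Set.ncard_union_eq,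
    Set.ncard_image_of_injective _ (Prod.mk_right_injective v), slaterScoreAvoiding]
  exact Set.disjoint_left.mpr fun p ⟨u, _, hu⟩ hp => hp.1 (hu ▸ rfl)

theorem slaterScore_moveToBottom [Finite V] {r : V → V → Prop} (s : V → V → Prop) {v : V}
    (hv : ¬ r v v) :
    slaterScore r (moveToBottom s v) = {u | r u v}.ncard + slaterScoreAvoiding r s v := by
  have hsplit : {p : V × V | moveToBottom s v p.1 p.2 ∧ r p.1 p.2} = (·, v) '' {u | r u v} ∪
      {p : V × V | p.1 ≠ v ∧ p.2 ≠ v ∧ s p.1 p.2 ∧ r p.1 p.2} := by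
    ext ⟨x, y⟩
    simp only [Set.mem_ofPred_eq, Set.mem_union, Set.mem_image, Prod.mk.injEq, moveToBottom]
    constructor
    · rintro ⟨⟨hx, rfl | hxy⟩, hxy'⟩
      · exact .inl ⟨x, hxy', rfl, rfl⟩
      · obtain rfl | hy := eq_or_ne y v
        · exact .inl ⟨x, hxy', rfl, rfl⟩
        · exact .inr ⟨hx, hy, hxy, hxy'⟩
    · rintro (⟨u, hu, rfl, rfl⟩ | ⟨hx, -, hxy, hxy'⟩)
      · exact ⟨⟨fun h => hv (h ▸ hu), .inl rfl⟩, hu⟩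
      · exact ⟨⟨hx, .inr hxy⟩, hxy'⟩
  rw [slaterScore, hsplit, Set.ncard_union_eq,
    Set.ncard_image_of_injective _ (Prod.mk_left_injective v), slaterScoreAvoiding]
  exact Set.disjoint_left.mpr fun p ⟨u, _, hu⟩ hp => hp.2.1 (hu ▸ rfl)

/-- if the out-degree of `v` is strictly less than `(n-1)/2`
then `v` is not in the Slater set. -/
theorem slater_excludes_low_outdegree [Fintype V] (r : V → V → Prop)
    (hT : IsTournament r) (v : V)
    (hdeg : 2 * {u | r v u}.ncard < Fintype.card V - 1) :
    v ∉ slaterSet r := by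
  rintro ⟨s, ⟨hs, hmax⟩, htop⟩
  have hdegrees := hT.ncard_out_add_ncard_in v
  have hle := hmax _ (isStrictTotalOrder_moveToBottom hs v)
  rw [slaterScore_moveToBottom s (hT.1 v), slaterScore_eq_of_top (hT.1 v) htop] at hle
  rw [Nat.card_eq_fintype_card] at hdegrees
  omega
end

section
/- For every odd n ≥ 3, the Slater set of the regular tournament T_reg on n vertices is the entire vertex set {0, 1, …, n−1}. -/
open scoped Classical

variable {V : Type*}

/-- The regular tournament on `Fin n` (for odd `n`): vertex `i` dominates
`i + k (mod n)` for every `k` with `1 ≤ k ≤ (n-1)/2` (i.e. `2 * k ≤ n - 1`). -/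
def regRel (n : ℕ) [NeZero n] : Fin n → Fin n → Prop :=
  fun i j => ∃ k : ℕ, 1 ≤ k ∧ 2 * k ≤ n - 1 ∧ j = i + (Fin.ofNat n k)

/-!
A Slater order can be transported along any automorphism of the tournament without changing
its score, so the Slater set of a vertex-transitive tournament is either empty or everything;
on a finite vertex set it is nonempty. The rotations `x ↦ x + d` are automorphisms of the
regular tournament acting transitively on `Fin n`.
-/

section

variable {W : Type*}

theorem slaterScore_preimage {r' : V → V → Prop} {r : W → W → Prop} (e : r' ≃r r)
    (s : W → W → Prop) : slaterScore r' (e ⁻¹'o s) = slaterScore r s := by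
  have hpre : {p : V × V | (e ⁻¹'o s) p.1 p.2 ∧ r' p.1 p.2} =
      Prod.map e e ⁻¹' {p : W × W | s p.1 p.2 ∧ r p.1 p.2} := by
    ext p
    simp [Order.Preimage, e.map_rel_iff]
  rw [slaterScore, hpre, Set.ncard_preimage_of_injective_subset_range
    (e.injective.prodMap e.injective)]
  · rfl
  · rw [(e.surjective.prodMap e.surjective).range_eq]
    exact Set.subset_univ _

theorem IsSlaterOrder.preimage {r' : V → V → Prop} {r : W → W → Prop} {s : W → W → Prop}
    (hs : IsSlaterOrder r s) (e : r' ≃r r) : IsSlaterOrder r' (e ⁻¹'o s) := by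
  have := hs.1
  refine ⟨(RelIso.preimage e.toEquiv s).toRelEmbedding.isStrictTotalOrder, fun t ht => ?_⟩
  calc slaterScore r' t = slaterScore r (e.symm ⁻¹'o t) := (slaterScore_preimage e.symm t).symm
    _ ≤ slaterScore r s :=
        hs.2 _ (RelIso.preimage e.symm.toEquiv t).toRelEmbedding.isStrictTotalOrder
    _ = slaterScore r' (e ⁻¹'o s) := (slaterScore_preimage e s).symm

end

theorem exists_isSlaterOrder [Finite V] (r : V → V → Prop) : ∃ s, IsSlaterOrder r s := by
  obtain ⟨s, hs, hmax⟩ := Set.exists_max_image {s : V → V → Prop | IsStrictTotalOrder V s}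
    (slaterScore r) (Set.toFinite _)
    ⟨WellOrderingRel, show IsStrictTotalOrder V _ from inferInstance⟩
  exact ⟨s, hs, hmax⟩

theorem exists_forall_ne_rel_of_isStrictTotalOrder [Finite V] [Nonempty V] (s : V → V → Prop)
    [IsStrictTotalOrder V s] : ∃ m, ∀ x, x ≠ m → s m x := by
  have wf : WellFounded s := Finite.wellFounded_of_trans_of_irrefl s
  refine ⟨wf.min Set.univ Set.univ_nonempty, fun x hx => ?_⟩
  exact ((trichotomous_of s x _).resolve_left (wf.not_lt_min _ (Set.mem_univ x))).resolve_left hx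

theorem slaterSet_eq_univ_of_forall_exists_relIso [Finite V] {r : V → V → Prop}
    (htrans : ∀ m m' : V, ∃ e : r ≃r r, e m = m') : slaterSet r = Set.univ := by
  refine Set.eq_univ_of_forall fun m => ?_
  have : Nonempty V := ⟨m⟩
  obtain ⟨s, hs⟩ := exists_isSlaterOrder r
  have := hs.1
  obtain ⟨m₀, hm₀⟩ := exists_forall_ne_rel_of_isStrictTotalOrder s
  obtain ⟨e, rfl⟩ := htrans m m₀
  exact ⟨e ⁻¹'o s, hs.preimage e, fun x hx => hm₀ (e x) (e.injective.ne hx)⟩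

theorem regRel_add_right {n : ℕ} [NeZero n] (i j d : Fin n) :
    regRel n (i + d) (j + d) ↔ regRel n i j := by
  simp only [regRel, add_right_comm i d, add_left_inj]

theorem exists_relIso_regRel_apply_eq {n : ℕ} [NeZero n] (m m' : Fin n) :
    ∃ e : regRel n ≃r regRel n, e m = m' :=
  ⟨⟨Equiv.addRight (m' - m), regRel_add_right _ _ _⟩, add_sub_cancel m m'⟩

theorem slaterSet_regular_tournament_general (n : ℕ) [NeZero n] :
    slaterSet (regRel n) = Set.univ :=
  slaterSet_eq_univ_of_forall_exists_relIso exists_relIso_regRel_apply_eq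

/-- for odd `n ≥ 3` the Slater set of the regular tournament on
`n` vertices is the whole vertex set. -/
theorem slaterSet_regular_tournament (n : ℕ) [NeZero n] (hodd : Odd n) (hn : 3 ≤ n) :
    slaterSet (regRel n) = Set.univ :=
  slaterSet_regular_tournament_general n
end

section
/- Let T = (V, ≻) be a tournament and suppose a vertex u covers a vertex v, i.e., u ≻ v and every w with v ≻ w also satisfies u ≻ w. Then every maximal lottery p of T satisfies p(v) = 0; in particular, v does not belong to the bipartisan set of T. -/
open scoped Classical

variable {V : Type*}

/-- The skew-adjacency matrix of a tournament: `1` if `a ≻ b`, `-1` if `b ≻ a`, `0` otherwise. -/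
noncomputable def skew (r : V → V → Prop) (a b : V) : ℝ :=
  if r a b then 1 else if r b a then -1 else 0

/-- `p` is a maximal lottery of the tournament `r`: a probability distribution with
`∑ a, p a * g a b ≥ 0` for every vertex `b`, where `g` is the skew-adjacency matrix. -/
def IsMaximalLottery [Fintype V] (r : V → V → Prop) (p : V → ℝ) : Prop :=
  (∀ a, 0 ≤ p a) ∧ (∑ a, p a = 1) ∧ ∀ b, 0 ≤ ∑ a, p a * skew r a b

/-- The bipartisan set: the support of the maximal lottery. -/
def bipartisanSet [Fintype V] (r : V → V → Prop) : Set V :=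
  {a | ∃ p : V → ℝ, IsMaximalLottery r p ∧ 0 < p a}

/-- if `u` covers `v` then every maximal lottery puts probability `0`
on `v`; in particular `v` is not in the bipartisan set. -/
theorem covered_vertex_not_in_bipartisan [Fintype V] (r : V → V → Prop)
    (hT : IsTournament r) (u v : V) (huv : r u v) (hcov : ∀ w, r v w → r u w) :
    (∀ p : V → ℝ, IsMaximalLottery r p → p v = 0) ∧ v ∉ bipartisanSet r := by
  obtain ⟨hirr, htot⟩ := hT
  have hskew_anti : ∀ a b : V, skew r a b = - skew r b a := by
    intro a b
    by_cases hab : a = b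
    · subst hab; simp [skew, hirr a]
    · by_cases h1 : r a b
      · have h2 : ¬ r b a := (htot a b hab).mp h1
        simp [skew, h1, h2]
      · have h2 : r b a := by
          by_contra h2
          exact h1 ((htot a b hab).mpr h2)
        simp [skew, h1, h2]
  have key : ∀ p : V → ℝ, IsMaximalLottery r p → p v = 0 := by
    intro p hml
    obtain ⟨hp0, hp1, hpm⟩ := hml
    by_contra hv
    have hpv : 0 < p v := lt_of_le_of_ne (hp0 v) (Ne.symm hv)
    have hvu : v ≠ u := by rintro rfl; exact hirr v huv
    have hsvu : skew r v u = -1 := by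
      have h2 : ¬ r v u := by
        intro h; exact ((htot u v hvu.symm).mp huv) h
      simp [skew, h2, huv]
    -- pointwise inequality
    have hpt : ∀ a : V, skew r a u ≤ skew r a v := by
      intro a
      by_cases hau : a = u
      · subst hau; simp [skew, hirr a, huv]
      · by_cases h1 : r a u
        · have hav : r a v := by
            by_contra h3
            have hav' : a ≠ v := fun hE => ((htot u v hvu.symm).mp huv) (hE ▸ h1)
            have : r v a := by
              by_contra h4
              exact h3 ((htot a v hav').mpr h4)
            exact ((htot a u hau).mp h1) (hcov a this)
          simp [skew, h1, hav]
        · have h2 : r u a := (htot u a (Ne.symm hau)).mpr (by simpa using h1)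
          have : skew r a u = -1 := by simp [skew, h1, h2]
          rw [this]
          unfold skew
          split_ifs <;> norm_num
    -- total weighted sum is zero
    have hQ : ∑ b : V, p b * ∑ a : V, p a * skew r a b = 0 := by
      have h1 : ∑ b : V, p b * ∑ a : V, p a * skew r a b
          = ∑ b : V, ∑ a : V, p b * (p a * skew r a b) := by
        simp [Finset.mul_sum]
      have h2 : ∑ b : V, ∑ a : V, p b * (p a * skew r a b)
          = - ∑ b : V, ∑ a : V, p b * (p a * skew r a b) := by
        conv_lhs => rw [Finset.sum_comm]
        rw [← Finset.sum_neg_distrib]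
        apply Finset.sum_congr rfl
        intro a _
        rw [← Finset.sum_neg_distrib]
        apply Finset.sum_congr rfl
        intro b _
        rw [hskew_anti a b]
        ring
      have := h2
      linarith [h1, h2]
    have hterm : ∀ b : V, 0 ≤ p b * ∑ a : V, p a * skew r a b := fun b =>
      mul_nonneg (hp0 b) (hpm b)
    have hzero : p v * ∑ a : V, p a * skew r a v = 0 := by
      have := (Finset.sum_eq_zero_iff_of_nonneg (fun b _ => hterm b)).mp hQ
      exact this v (Finset.mem_univ v)
    have hSv : ∑ a : V, p a * skew r a v = 0 := by
      rcases mul_eq_zero.mp hzero with h | h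
      · exact absurd h (ne_of_gt hpv)
      · exact h
    -- the gap
    have hgap : p v ≤ ∑ a : V, p a * (skew r a v - skew r a u) := by
      have h1 : p v * (skew r v v - skew r v u) ≤ ∑ a : V, p a * (skew r a v - skew r a u) :=
        Finset.single_le_sum (f := fun a => p a * (skew r a v - skew r a u))
          (fun a _ => mul_nonneg (hp0 a) (by linarith [hpt a])) (Finset.mem_univ v)
      have hv0 : skew r v v = 0 := by simp [skew, hirr v]
      rw [hv0, hsvu] at h1
      linarith
    have hsplit : ∑ a : V, p a * (skew r a v - skew r a u)
        = (∑ a : V, p a * skew r a v) - ∑ a : V, p a * skew r a u := by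
      rw [← Finset.sum_sub_distrib]
      apply Finset.sum_congr rfl
      intro a _
      ring
    have hSu := hpm u
    rw [hsplit, hSv] at hgap
    linarith
  refine ⟨key, ?_⟩
  rintro ⟨p, hml, hpos⟩
  rw [key p hml] at hpos
  exact lt_irrefl 0 hpos
end

section
/- Let T = (V, ≻) be a tournament on an odd number n of vertices in which every vertex has in-degree and out-degree both equal to (n−1)/2. Then the uniform distribution on V is a maximal lottery of T, and every maximal lottery of T equals the uniform distribution on V. Consequently, the bipartisan set of T is the entire vertex set V. -/
open scoped Classical

variable {V : Type*}

noncomputable def skewZ (r : V → V → Prop) (a b : V) : ℤ :=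
  if r a b then 1 else if r b a then -1 else 0

lemma skew_eq_cast (r : V → V → Prop) (a b : V) :
    skew r a b = ((skewZ r a b : ℤ) : ℝ) := by
  simp [skew, skewZ, apply_ite (fun z : ℤ => (z : ℝ))]

lemma skew_eq_sub {r : V → V → Prop} (hT : IsTournament r) (a b : V) :
    skew r a b = (if r a b then (1:ℝ) else 0) - (if r b a then 1 else 0) := by
  unfold skew
  by_cases hab : a = b
  · subst hab; simp [hT.1 a]
  · by_cases h1 : r a b
    · have h2 : ¬ r b a := (hT.2 a b hab).mp h1
      simp [h1, h2]
    · by_cases h2 : r b a <;> simp [h1, h2]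

lemma sum_ite_eq_ncard [Fintype V] (P : V → Prop) :
    ∑ a : V, (if P a then (1:ℝ) else 0) = ({a | P a}.ncard : ℝ) := by
  rw [Finset.sum_boole,
    show {a | P a} = ↑(Finset.univ.filter P) by ext u; simp, Set.ncard_coe_finset]

lemma sum_subtype_ne [Fintype V] (f : V → ℝ) (v : V) :
    ∑ a : V, f a = f v + ∑ a : {x : V // x ≠ v}, f a.1 := by
  rw [Fintype.sum_eq_add_sum_compl v f]
  congr 1
  exact Finset.sum_subtype ({v}ᶜ : Finset V)
    (fun x => by simp only [Finset.mem_compl, Finset.mem_singleton]) f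

/-- in a tournament on an odd number `n` of vertices where every vertex
has in-degree and out-degree `(n-1)/2`, the uniform distribution is a maximal
lottery, it is the unique maximal lottery, and the bipartisan set is the whole
vertex set. -/
theorem bipartisan_of_regular [Fintype V] (r : V → V → Prop) (hT : IsTournament r)
    (hodd : Odd (Fintype.card V))
    (hreg : ∀ v : V, {u | r v u}.ncard = (Fintype.card V - 1) / 2 ∧
        {u | r u v}.ncard = (Fintype.card V - 1) / 2) :
    IsMaximalLottery r (fun _ => ((Fintype.card V : ℝ))⁻¹) ∧
    (∀ p : V → ℝ, IsMaximalLottery r p → p = fun _ => ((Fintype.card V : ℝ))⁻¹) ∧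
    bipartisanSet r = Set.univ := by
  classical
  have hn0 : Fintype.card V ≠ 0 := by
    rintro h
    rw [h] at hodd
    exact (Nat.not_odd_iff_even.mpr Even.zero) hodd
  have hnR : ((Fintype.card V : ℝ)) ≠ 0 := Nat.cast_ne_zero.mpr hn0
  have hnpos : (0:ℝ) < (Fintype.card V : ℝ) :=
    Nat.cast_pos.mpr (Nat.pos_of_ne_zero hn0)
  -- column sums of skew are zero
  have hcol : ∀ b, ∑ a, skew r a b = 0 := by
    intro b
    calc ∑ a, skew r a b
        = ∑ a, ((if r a b then (1:ℝ) else 0) - (if r b a then 1 else 0)) := by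
          exact Finset.sum_congr rfl fun a _ => skew_eq_sub hT a b
      _ = ({a | r a b}.ncard : ℝ) - ({a | r b a}.ncard : ℝ) := by
          rw [Finset.sum_sub_distrib, sum_ite_eq_ncard, sum_ite_eq_ncard]
      _ = 0 := by rw [(hreg b).2, (hreg b).1, sub_self]
  have hrow : ∀ a, ∑ b, skew r a b = 0 := by
    intro a
    calc ∑ b, skew r a b
        = ∑ b, ((if r a b then (1:ℝ) else 0) - (if r b a then 1 else 0)) := by
          exact Finset.sum_congr rfl fun b _ => skew_eq_sub hT a b
      _ = ({b | r a b}.ncard : ℝ) - ({b | r b a}.ncard : ℝ) := by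
          rw [Finset.sum_sub_distrib, sum_ite_eq_ncard, sum_ite_eq_ncard]
      _ = 0 := by rw [(hreg a).1, (hreg a).2, sub_self]
  have huml : IsMaximalLottery r (fun _ => ((Fintype.card V : ℝ))⁻¹) := by
    refine ⟨fun a => by positivity, ?_, ?_⟩
    · rw [Finset.sum_const, Finset.card_univ, nsmul_eq_mul, mul_inv_cancel₀ hnR]
    · intro b
      rw [← Finset.mul_sum, hcol b, mul_zero]
  have huniq : ∀ p : V → ℝ, IsMaximalLottery r p →
      p = fun _ => ((Fintype.card V : ℝ))⁻¹ := by
    intro p hp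
    obtain ⟨hp0, hp1, hp2⟩ := hp
    have hA : ∀ b, ∑ a, p a * skew r a b = 0 := by
      have htot : ∑ b, ∑ a, p a * skew r a b = 0 := by
        rw [Finset.sum_comm]
        refine Finset.sum_eq_zero fun a _ => ?_
        rw [← Finset.mul_sum, hrow a, mul_zero]
      have h := (Finset.sum_eq_zero_iff_of_nonneg (fun b _ => hp2 b)).mp htot
      exact fun b => h b (Finset.mem_univ b)
    set q : V → ℝ := fun a => p a - (Fintype.card V : ℝ)⁻¹ with hq
    have hqsum : ∑ a, q a = 0 := by
      rw [hq]
      rw [Finset.sum_sub_distrib, hp1, Finset.sum_const, Finset.card_univ,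
        nsmul_eq_mul, mul_inv_cancel₀ hnR, sub_self]
    have hqB : ∀ b, ∑ a, q a * skew r a b = 0 := by
      intro b
      simp only [hq, sub_mul]
      rw [Finset.sum_sub_distrib, hA b, ← Finset.mul_sum, hcol b, mul_zero, sub_self]
    have : Nonempty V := Fintype.card_pos_iff.mp (Nat.pos_of_ne_zero hn0)
    obtain ⟨v₀⟩ := this
    set N : Matrix {x : V // x ≠ v₀} {x : V // x ≠ v₀} ℤ :=
      Matrix.of (fun a b => skewZ r a.1 b.1 - skewZ r v₀ b.1) with hN
    have hskewZ_ne : ∀ a b : V, a ≠ b → ((skewZ r a b : ℤ) : ZMod 2) = 1 := by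
      intro a b hab
      by_cases h1 : r a b
      · simp [skewZ, h1]
      · have h2 : r b a := by
          by_contra h2
          exact h2 ((hT.2 b a (Ne.symm hab)).mpr h1)
        have h3 : skewZ r a b = -1 := by simp [skewZ, h1, h2]
        rw [h3]; decide
    have hNmod : N.map (Int.cast : ℤ → ZMod 2) = 1 := by
      ext a b
      rw [Matrix.map_apply, hN]
      by_cases hab : a = b
      · subst hab
        have h0 : skewZ r a.1 a.1 = 0 := by simp [skewZ, hT.1 a.1]
        have h1 : ((skewZ r v₀ a.1 : ℤ) : ZMod 2) = 1 :=
          hskewZ_ne v₀ a.1 (Ne.symm a.2)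
        simp only [Matrix.of_apply, Int.cast_sub, h0, Int.cast_zero, h1,
          Matrix.one_apply_eq]
        decide
      · have hab' : a.1 ≠ b.1 := fun h => hab (Subtype.ext h)
        have h1 := hskewZ_ne a.1 b.1 hab'
        have h2 := hskewZ_ne v₀ b.1 (Ne.symm b.2)
        simp only [Matrix.of_apply, Int.cast_sub, h1, h2, sub_self,
          Matrix.one_apply_ne hab]
    have hdet2 : ((N.det : ℤ) : ZMod 2) = 1 := by
      have h := RingHom.map_det (Int.castRingHom (ZMod 2)) N
      simp only [Int.coe_castRingHom, RingHom.mapMatrix_apply] at h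
      rw [h, hNmod, Matrix.det_one]
    have hdet : N.det ≠ 0 := by
      intro h
      rw [h] at hdet2
      exact absurd hdet2 (by decide)
    set M : Matrix {x : V // x ≠ v₀} {x : V // x ≠ v₀} ℝ :=
      N.map (Int.cast : ℤ → ℝ) with hM
    have hMdet : IsUnit M.det := by
      rw [hM, show (N.map (Int.cast : ℤ → ℝ)).det = ((N.det : ℤ) : ℝ) from
        (RingHom.map_det (Int.castRingHom ℝ) N).symm]
      exact isUnit_iff_ne_zero.mpr (Int.cast_ne_zero.mpr hdet)
    set q' : {x : V // x ≠ v₀} → ℝ := fun a => q a.1 with hq'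
    have hvm : Matrix.vecMul q' M = 0 := by
      funext b
      have key : ∀ a : {x : V // x ≠ v₀}, q' a * M a b
          = q a.1 * skew r a.1 b.1 - q a.1 * skew r v₀ b.1 := by
        intro a
        rw [hq', hM, hN]
        simp only [Matrix.map_apply, Matrix.of_apply, Int.cast_sub,
          ← skew_eq_cast]
        ring
      have e1 : ∑ a : {x : V // x ≠ v₀}, q a.1 * skew r a.1 b.1
          = - (q v₀ * skew r v₀ b.1) := by
        have := sum_subtype_ne (fun a => q a * skew r a b.1) v₀
        rw [hqB b.1] at this
        linarith
      have e2 : ∑ a : {x : V // x ≠ v₀}, q a.1 = - q v₀ := by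
        have := sum_subtype_ne q v₀
        rw [hqsum] at this
        linarith
      have e3 : ∑ a : {x : V // x ≠ v₀}, q a.1 * skew r v₀ b.1
          = (- q v₀) * skew r v₀ b.1 := by
        rw [← e2, Finset.sum_mul]
      calc Matrix.vecMul q' M b = ∑ a, q' a * M a b := by
            rw [Matrix.vecMul, dotProduct]
        _ = ∑ a : {x : V // x ≠ v₀},
              (q a.1 * skew r a.1 b.1 - q a.1 * skew r v₀ b.1) :=
            Finset.sum_congr rfl fun a _ => key a
        _ = 0 := by
            rw [Finset.sum_sub_distrib, e1, e3]
            ring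
    have hq0 : q' = 0 := by
      have h1 : q' = Matrix.vecMul (Matrix.vecMul q' M) M⁻¹ := by
        rw [Matrix.vecMul_vecMul, Matrix.mul_nonsing_inv M hMdet, Matrix.vecMul_one]
      rw [hvm, Matrix.zero_vecMul] at h1
      exact h1
    have hqall : ∀ a, q a = 0 := by
      intro a
      by_cases ha : a = v₀
      · subst ha
        have e2 : ∑ x : {y : V // y ≠ a}, q x.1 = 0 := by
          refine Finset.sum_eq_zero fun x _ => ?_
          exact congrFun hq0 x
        have := sum_subtype_ne q a
        rw [hqsum, e2] at this
        linarith
      · exact congrFun hq0 ⟨a, ha⟩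
    funext a
    have := hqall a
    rw [hq] at this
    simp only at this
    linarith [this]
  refine ⟨huml, huniq, ?_⟩
  rw [Set.eq_univ_iff_forall]
  intro a
  exact ⟨_, huml, by positivity⟩
end

section
/- Let T = (V₁ ∪ V₂, ≻) be a tournament on the disjoint union of nonempty sets V₁ and V₂ such that: (i) the number of ordered pairs (a, b) with a ∈ V₁, b ∈ V₂ and a ≻ b is at most |V₁|·|V₂|/2 − 1, and (ii) |V₁| is odd and in the subtournament induced on V₁ every vertex has in-degree and out-degree equal to (|V₁|−1)/2. Then every maximal lottery p of T satisfies p(v) > 0 for at least one v ∈ V₂; in particular, the bipartisan set of T contains a vertex of V₂. -/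
open scoped Classical

variable {V : Type*}

lemma skew_split' (r : V → V → Prop) (hnot : ∀ a b, ¬ (r a b ∧ r b a)) (a b : V) :
    skew r a b = (if r a b then (1:ℝ) else 0) - (if r b a then 1 else 0) := by
  have := hnot a b
  unfold skew
  split_ifs <;> simp_all


open Matrix in
lemma vecMul_eq_zero' {S : Type*} [Fintype S] [DecidableEq S] (M : Matrix S S ℝ)
    (hdet : M.det ≠ 0) (v : S → ℝ) (h : Matrix.vecMul v M = 0) : v = 0 := by
  have hinv := Matrix.mul_nonsing_inv M (isUnit_iff_ne_zero.mpr hdet)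
  calc v = v ᵥ* (M * M⁻¹) := by rw [hinv, Matrix.vecMul_one]
  _ = (v ᵥ* M) ᵥ* M⁻¹ := by rw [Matrix.vecMul_vecMul]
  _ = 0 := by rw [h, Matrix.zero_vecMul]

lemma det_skew_ne_zero' {S : Type*} [Fintype S] [DecidableEq S] (hS : Even (Fintype.card S))
    (r : S → S → Prop) (hirr : ∀ v, ¬ r v v) (htot : ∀ u v : S, u ≠ v → (r u v ∨ r v u))
    (hex : ∀ u v : S, ¬ (r u v ∧ r v u)) :
    (Matrix.of (fun a b => skew r a b)).det ≠ 0 := by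
  set m := Fintype.card S with hm
  set N : Matrix S S ℤ := Matrix.of (fun a b => if r a b then 1 else if r b a then -1 else 0) with hN
  set A : Matrix S S (ZMod 2) := N.map (Int.castRingHom (ZMod 2)) with hA
  have hAent : ∀ i j, A i j = if i = j then 0 else 1 := by
    intro i j
    by_cases hij : i = j
    · subst hij; simp [hA, hN, Matrix.map_apply, hirr i]
    · rcases htot i j hij with h | h
      · simp [hA, hN, Matrix.map_apply, h, hij]
      · have h' : ¬ r i j := fun hc => hex i j ⟨hc, h⟩
        simp [hA, hN, Matrix.map_apply, h, h', hij]
  have hAA : A * A = 1 := by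
    ext i j
    have hmpos : 0 < m := Fintype.card_pos_iff.mpr ⟨i⟩
    rw [Matrix.mul_apply]
    have hterm : ∀ k, A i k * A k j = if i = k ∨ k = j then 0 else 1 := by
      intro k; rw [hAent, hAent]
      by_cases h1 : i = k <;> by_cases h2 : k = j <;> simp [h1, h2]
    rw [Finset.sum_congr rfl (fun k _ => hterm k), Finset.sum_ite, Finset.sum_const,
      Finset.sum_const, smul_zero, zero_add, nsmul_eq_mul, mul_one]
    have hfilt : (Finset.univ.filter (fun k => ¬(i = k ∨ k = j))).card
        = m - (Finset.univ.filter (fun k => (i = k ∨ k = j))).card := by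
      rw [Finset.filter_not, Finset.card_sdiff_of_subset (Finset.filter_subset _ _)]
      simp [hm]
    have hset : (Finset.univ.filter (fun k => (i = k ∨ k = j))) = ({i, j} : Finset S) := by
      ext k; simp [eq_comm, or_comm]

    rw [hfilt, hset]
    obtain ⟨t, ht⟩ := hS
    by_cases hij : i = j
    · subst hij
      have : ({i, i} : Finset S).card = 1 := by simp
      rw [this, Matrix.one_apply_eq]
      have h2 : (m - 1) % 2 = 1 := by omega
      rw [← ZMod.natCast_mod, h2]
      simp
    · have : ({i, j} : Finset S).card = 2 := by rw [Finset.card_insert_of_notMem (by simp [hij]), Finset.card_singleton]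
      rw [this, Matrix.one_apply_ne hij]
      have h2 : (m - 2) % 2 = 0 := by omega
      rw [← ZMod.natCast_mod, h2]
      simp
  have hdetA : IsUnit A.det := Matrix.isUnit_det_of_left_inverse hAA
  have hND : (Int.castRingHom (ZMod 2)) N.det ≠ 0 := by
    rw [RingHom.map_det]
    exact hdetA.ne_zero
  have hN0 : N.det ≠ 0 := fun h => hND (by rw [h]; simp)
  have hMN : (Matrix.of fun a b => skew r a b) = N.map (Int.castRingHom ℝ) := by
    ext a b
    simp only [Matrix.map_apply, Matrix.of_apply, hN, skew]
    split_ifs <;> simp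
  have hmm : N.map ⇑(Int.castRingHom ℝ) = (Int.castRingHom ℝ).mapMatrix N := rfl
  rw [hMN, hmm, ← RingHom.map_det]
  simpa using hN0


set_option maxHeartbeats 2000000 in
/-- if the vertex set is the disjoint union of nonempty `V₁` and `V₂`,
at most `|V₁|·|V₂|/2 - 1` edges go from `V₁` to `V₂` (i.e. `2·#edges + 2 ≤ |V₁|·|V₂|`),
`|V₁|` is odd, and the subtournament induced on `V₁` is regular (all in- and
out-degrees within `V₁` are `(|V₁|-1)/2`), then every maximal lottery puts positive
probability on some vertex of `V₂`; in particular the bipartisan set meets `V₂`. -/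
theorem bipartisan_meets_heavy_side [Fintype V] (r : V → V → Prop)
    (hT : IsTournament r) (V1 V2 : Set V)
    (hdisj : Disjoint V1 V2) (hunion : V1 ∪ V2 = Set.univ)
    (h1 : V1.Nonempty) (h2 : V2.Nonempty)
    (hedges : 2 * {q : V × V | q.1 ∈ V1 ∧ q.2 ∈ V2 ∧ r q.1 q.2}.ncard + 2 ≤
        V1.ncard * V2.ncard)
    (hodd : Odd V1.ncard)
    (hreg : ∀ v ∈ V1, {u ∈ V1 | r v u}.ncard = (V1.ncard - 1) / 2 ∧
        {u ∈ V1 | r u v}.ncard = (V1.ncard - 1) / 2) :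
    ∀ p : V → ℝ, IsMaximalLottery r p → ∃ v ∈ V2, 0 < p v := by
  intro p hp
  by_contra hcon
  push_neg at hcon
  have hex : ∀ a b : V, ¬ (r a b ∧ r b a) := by
    rintro a b ⟨hab, hba⟩
    by_cases h : a = b
    · exact hT.1 a (h ▸ hab)
    · exact (hT.2 a b h).mp hab hba
  have htotal : ∀ a b : V, a ≠ b → (r a b ∨ r b a) := by
    intro a b h
    by_cases hab : r a b
    · exact Or.inl hab
    · exact Or.inr ((hT.2 b a (Ne.symm h)).mpr (by simpa using hab))
  set F1 : Finset V := V1.toFinset with hF1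
  set F2 : Finset V := V2.toFinset with hF2
  set n := V1.ncard with hn
  have hzero : ∀ a, a ∉ F1 → p a = 0 := by
    intro a ha
    have haV2 : a ∈ V2 := by
      have h' : a ∈ V1 ∪ V2 := hunion ▸ Set.mem_univ a
      rcases h' with h | h
      · exact absurd (Set.mem_toFinset.mpr h) ha
      · exact h
    exact le_antisymm (hcon a haV2) (hp.1 a)
  have hres : ∀ f : V → ℝ, ∑ a, p a * f a = ∑ a ∈ F1, p a * f a :=
    fun f => (Finset.sum_subset F1.subset_univ
      (fun x _ hx => by rw [hzero x hx, zero_mul])).symm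
  have hcount : ∀ (q : V → Prop), (F1.filter q).card = {u ∈ V1 | q u}.ncard := by
    intro q
    rw [Set.ncard_eq_toFinset_card']
    congr 1
    ext x
    simp [hF1, Set.mem_toFinset]
  have hsum_split : ∀ (g h : V → Prop) (s : Finset V),
      (∑ b ∈ s, ((if g b then (1:ℝ) else 0) - (if h b then 1 else 0)))
        = (s.filter g).card - (s.filter h).card := by
    intro g h s
    rw [Finset.sum_sub_distrib, Finset.sum_boole, Finset.sum_boole]
  have hrow : ∀ a ∈ V1, ∑ b ∈ F1, skew r a b = 0 := by
    intro a ha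
    rw [Finset.sum_congr rfl (fun b _ => skew_split' r hex a b), hsum_split,
      hcount, hcount, (hreg a ha).1, (hreg a ha).2, sub_self]
  have hcol : ∀ b ∈ V1, ∑ a ∈ F1, skew r a b = 0 := by
    intro b hb
    rw [Finset.sum_congr rfl (fun a _ => skew_split' r hex a b), hsum_split,
      hcount, hcount, (hreg b hb).1, (hreg b hb).2, sub_self]
  have hnn : ∀ b ∈ F1, 0 ≤ ∑ a ∈ F1, p a * skew r a b := fun b _ => by
    rw [← hres]; exact hp.2.2 b
  have htot0 : ∑ b ∈ F1, ∑ a ∈ F1, p a * skew r a b = 0 := by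
    rw [Finset.sum_comm]
    refine Finset.sum_eq_zero fun a ha => ?_
    rw [← Finset.mul_sum, hrow a (Set.mem_toFinset.mp ha), mul_zero]
  have hEq := (Finset.sum_eq_zero_iff_of_nonneg hnn).mp htot0
  obtain ⟨w, hw⟩ := h1
  set qf : V → ℝ := fun a => p a - p w with hqf
  have hq0 : ∀ b ∈ F1, ∑ a ∈ F1, qf a * skew r a b = 0 := by
    intro b hb
    simp only [hqf, sub_mul, Finset.sum_sub_distrib]
    rw [hEq b hb, ← Finset.mul_sum, hcol b (Set.mem_toFinset.mp hb), mul_zero, sub_zero]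
  have hcardS : Fintype.card ↥(V1 \ {w}) = n - 1 := by
    rw [← Nat.card_eq_fintype_card, Nat.card_coe_set_eq,
      Set.ncard_diff_singleton_of_mem hw]
  have hSeven : Even (Fintype.card ↥(V1 \ {w})) := by
    obtain ⟨t, ht⟩ := hodd
    rw [hcardS]
    exact ⟨t, by omega⟩
  set r' : ↥(V1 \ {w}) → ↥(V1 \ {w}) → Prop := fun i j => r i.1 j.1 with hr'
  set M : Matrix ↥(V1 \ {w}) ↥(V1 \ {w}) ℝ := Matrix.of (fun i j => skew r' i j) with hM
  have hdet : M.det ≠ 0 :=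
    det_skew_ne_zero' hSeven r' (fun i => hT.1 i.1)
      (fun i j hij => htotal i.1 j.1 (fun h => hij (Subtype.ext h)))
      (fun i j => hex i.1 j.1)
  set v : ↥(V1 \ {w}) → ℝ := fun i => qf i.1 with hv
  have hvM : Matrix.vecMul v M = 0 := by
    funext j
    show ∑ i, v i * M i j = 0
    have hMskew : ∀ i : ↥(V1 \ {w}), v i * M i j = qf i.1 * skew r i.1 j.1 := fun i => rfl
    rw [Finset.sum_congr rfl (fun i _ => hMskew i)]
    have hmem : ∀ x : V, x ∈ F1.erase w ↔ x ∈ V1 \ {w} := by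
      intro x
      rw [Finset.mem_erase, Set.mem_diff, Set.mem_singleton_iff, hF1, Set.mem_toFinset]
      tauto
    rw [← Finset.sum_subtype (F1.erase w) hmem (fun a => qf a * skew r a j.1)]
    rw [Finset.sum_subset (Finset.erase_subset w F1) ?_]
    · exact hq0 j.1 (Set.mem_toFinset.mpr j.2.1)
    · intro x hx hxe
      have : x = w := by
        by_contra hxw
        exact hxe (Finset.mem_erase.mpr ⟨hxw, hx⟩)
      rw [this, hqf]
      simp
  have hv0 : v = 0 := vecMul_eq_zero' M hdet v hvM
  have huni : ∀ a ∈ V1, p a = p w := by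
    intro a ha
    by_cases haw : a = w
    · rw [haw]
    · have h0 : v ⟨a, ⟨ha, by simpa using haw⟩⟩ = 0 := by rw [hv0]; rfl
      have h1 : p a - p w = 0 := h0
      linarith
  have hcardF1 : F1.card = n := by rw [hF1, hn, Set.ncard_eq_toFinset_card']
  have hnpos : 0 < n := (Set.ncard_pos (Set.toFinite V1)).mpr ⟨w, hw⟩
  have hsum1 : (n : ℝ) * p w = 1 := by
    have h' := hp.2.1
    rw [show ∑ a, p a = ∑ a ∈ F1, p a from
        (Finset.sum_subset F1.subset_univ (fun x _ hx => hzero x hx)).symm,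
      Finset.sum_congr rfl (fun a ha => huni a (Set.mem_toFinset.mp ha)),
      Finset.sum_const, hcardF1, nsmul_eq_mul] at h'
    exact h'
  have hpw : 0 < p w := by
    have hn' : (0:ℝ) < n := by exact_mod_cast hnpos
    by_contra hle
    push_neg at hle
    have hle2 : (n:ℝ) * p w ≤ (n:ℝ) * 0 := mul_le_mul_of_nonneg_left hle hn'.le
    rw [mul_zero] at hle2
    linarith [hsum1]
  have hdeg : ∀ b ∈ F2, n + 1 ≤ 2 * (F1.filter (fun a => r a b)).card := by
    intro b hb
    have hbV2 : b ∈ V2 := Set.mem_toFinset.mp hb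
    have hbn1 : b ∉ V1 := fun h => Set.disjoint_left.mp hdisj h hbV2
    have h0 : 0 ≤ ∑ a ∈ F1, p a * skew r a b := by rw [← hres]; exact hp.2.2 b
    have heq : ∑ a ∈ F1, p a * skew r a b
        = p w * (((F1.filter (fun a => r a b)).card : ℝ)
          - ((F1.filter (fun a => r b a)).card)) := by
      rw [Finset.sum_congr rfl (fun a ha => by rw [huni a (Set.mem_toFinset.mp ha)]),
        ← Finset.mul_sum, Finset.sum_congr rfl (fun a _ => skew_split' r hex a b), hsum_split]
    have hcardle : (F1.filter (fun a => r b a)).card ≤ (F1.filter (fun a => r a b)).card := by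
      by_contra hlt
      push_neg at hlt
      have hc : ((F1.filter (fun a => r a b)).card : ℝ)
          - ((F1.filter (fun a => r b a)).card) < 0 := by
        have := (Nat.cast_lt (α := ℝ)).mpr hlt
        linarith
      have hneg2 := mul_neg_of_pos_of_neg hpw hc
      rw [← heq] at hneg2
      linarith
    have hsplit : (F1.filter (fun a => r a b)).card + (F1.filter (fun a => r b a)).card = n := by
      have hneg : F1.filter (fun a => ¬ r a b) = F1.filter (fun a => r b a) := by
        apply Finset.filter_congr
        intro a ha
        have haV1 : a ∈ V1 := Set.mem_toFinset.mp ha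
        have hab : a ≠ b := fun h => hbn1 (h ▸ haV1)
        exact (hT.2 b a (Ne.symm hab)).symm
      rw [← hneg, Finset.card_filter_add_card_filter_not, hcardF1]
    obtain ⟨t, ht⟩ := hodd
    omega
  set P : Finset (V × V) := (F1 ×ˢ F2).filter (fun q => r q.1 q.2) with hP
  have hEP : {q : V × V | q.1 ∈ V1 ∧ q.2 ∈ V2 ∧ r q.1 q.2}.ncard = P.card := by
    rw [Set.ncard_eq_toFinset_card']
    congr 1
    ext ⟨a, b⟩
    simp [hP, Finset.mem_filter, Finset.mem_product, hF1, hF2, Set.mem_toFinset, and_assoc]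
  have hPsum : P.card = ∑ b ∈ F2, (F1.filter (fun a => r a b)).card := by
    rw [hP, Finset.card_filter, Finset.sum_product, Finset.sum_comm]
    exact Finset.sum_congr rfl fun b _ => (Finset.card_filter _ _).symm
  have hm2 : F2.card = V2.ncard := (Set.ncard_eq_toFinset_card' V2).symm
  have hmpos : 0 < V2.ncard := (Set.ncard_pos (Set.toFinite V2)).mpr h2
  have hbig : F2.card * (n + 1) ≤ 2 * P.card := by
    rw [hPsum, Finset.mul_sum]
    calc F2.card * (n+1) = ∑ _b ∈ F2, (n+1) := by rw [Finset.sum_const, smul_eq_mul]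
      _ ≤ ∑ b ∈ F2, 2 * (F1.filter (fun a => r a b)).card := Finset.sum_le_sum hdeg
  rw [hEP] at hedges
  set m := V2.ncard with hmdef
  rw [hm2] at hbig
  have hc1 : m * (n+1) = m * n + m := by ring
  have hc2 : n * m = m * n := Nat.mul_comm n m
  omega
end

section
/- Let T = (A ∪ B ∪ {x}, ≻) be a tournament where A and B are disjoint nonempty sets not containing x, every a ∈ A satisfies a ≻ x, x ≻ b for every b ∈ B, and the subtournament induced on B is transitive. Then x belongs to the Banks set of T if and only if there is no a ∈ A with a ≻ b for every b ∈ B. -/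
open scoped Classical

variable {V : Type*}

/-- `S` is a transitive subset: the restriction of `r` to `S` is transitive. -/
def TransOn (r : V → V → Prop) (S : Set V) : Prop :=
  ∀ a ∈ S, ∀ b ∈ S, ∀ c ∈ S, r a b → r b c → r a c

/-- The Banks set relative to a ground set `W`: the maximum elements of the
transitive subsets of `W` that are maximal (w.r.t. inclusion) among transitive
subsets of `W`. -/
def banksSetIn (r : V → V → Prop) (W : Set V) : Set V :=
  {m | ∃ S : Set V, S ⊆ W ∧ TransOn r S ∧ m ∈ S ∧ (∀ s ∈ S, s ≠ m → r m s) ∧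
    ∀ S' : Set V, S' ⊆ W → TransOn r S' → S ⊆ S' → S = S'}

/-- The Banks set of the tournament. -/
def banksSet (r : V → V → Prop) : Set V := banksSetIn r Set.univ

/-- in a tournament on `A ∪ B ∪ {x}` where every `a ∈ A` dominates `x`,
`x` dominates every `b ∈ B`, and `B` is transitive, the vertex `x` is in the Banks
set iff no `a ∈ A` dominates every `b ∈ B`. -/
theorem banks_iff_no_dominator [Fintype V] (r : V → V → Prop)
    (hT : IsTournament r) (A B : Set V) (x : V)
    (hAB : Disjoint A B) (hxA : x ∉ A) (hxB : x ∉ B)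
    (hA : A.Nonempty) (hB : B.Nonempty)
    (hunion : A ∪ B ∪ {x} = Set.univ)
    (hAx : ∀ a ∈ A, r a x) (hxB' : ∀ b ∈ B, r x b)
    (hBtrans : TransOn r B) :
    x ∈ banksSet r ↔ ¬ ∃ a ∈ A, ∀ b ∈ B, r a b := by
  obtain ⟨hirr, hasym⟩ := hT
  have hne : ∀ u v : V, r u v → u ≠ v := by
    rintro u v h rfl; exact hirr u h
  have hnot : ∀ u v : V, r u v → ¬ r v u := by
    intro u v h
    exact (hasym u v (hne u v h)).mp h
  constructor
  · rintro ⟨S, -, hStr, hxS, hmax, hmaximal⟩ ⟨a, haA, hadom⟩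
    have haS : ∀ s ∈ S, r a s := by
      intro s hs
      have hsU : s ∈ A ∪ B ∪ {x} := hunion ▸ Set.mem_univ s
      rcases hsU with (hsA | hsB) | hsx
      · exfalso
        have hsx : s ≠ x := fun h => hxA (h ▸ hsA)
        exact hnot x s (hmax s hs hsx) (hAx s hsA)
      · exact hadom s hsB
      · rw [Set.mem_singleton_iff] at hsx
        exact hsx ▸ hAx a haA
    have haNS : a ∉ S := fun h => hirr a (haS a h)
    have htr : TransOn r (insert a S) := by
      intro u hu v hv w hw ruv rvw
      rcases Set.mem_insert_iff.mp hu with hua | huS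
      · rcases Set.mem_insert_iff.mp hw with hwa | hwS
        · rw [hua] at ruv; rw [hwa] at rvw
          rcases Set.mem_insert_iff.mp hv with hva | hvS
          · rw [hva] at ruv; exact absurd ruv (hirr a)
          · exact absurd rvw (hnot a v (haS v hvS))
        · rw [hua]; exact haS w hwS
      · rcases Set.mem_insert_iff.mp hv with hva | hvS
        · rw [hva] at ruv
          exact absurd ruv (hnot a u (haS u huS))
        · rcases Set.mem_insert_iff.mp hw with hwa | hwS
          · rw [hwa] at rvw
            exact absurd rvw (hnot a v (haS v hvS))
          · exact hStr u huS v hvS w hwS ruv rvw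
    have heq := hmaximal (insert a S) (Set.subset_univ _) htr (Set.subset_insert a S)
    exact haNS (heq ▸ Set.mem_insert a S)
  · intro hno
    refine ⟨insert x B, Set.subset_univ _, ?_, Set.mem_insert x B, ?_, ?_⟩
    · intro u hu v hv w hw ruv rvw
      rcases Set.mem_insert_iff.mp hu with hua | huB
      · rcases Set.mem_insert_iff.mp hw with hwa | hwB
        · rw [hua] at ruv; rw [hwa] at rvw
          rcases Set.mem_insert_iff.mp hv with hva | hvB
          · rw [hva] at ruv; exact absurd ruv (hirr x)
          · exact absurd rvw (hnot x v (hxB' v hvB))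
        · rw [hua]; exact hxB' w hwB
      · rcases Set.mem_insert_iff.mp hv with hva | hvB
        · rw [hva] at ruv
          exact absurd ruv (hnot x u (hxB' u huB))
        · rcases Set.mem_insert_iff.mp hw with hwa | hwB
          · rw [hwa] at rvw
            exact absurd rvw (hnot x v (hxB' v hvB))
          · exact hBtrans u huB v hvB w hwB ruv rvw
    · intro s hs hsx
      rcases Set.mem_insert_iff.mp hs with rfl | hsB
      · exact absurd rfl hsx
      · exact hxB' s hsB
    · intro S' _ hS'tr hsub
      refine Set.Subset.antisymm hsub (fun s hs => ?_)
      have hsU : s ∈ A ∪ B ∪ {x} := hunion ▸ Set.mem_univ s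
      rcases hsU with (hsA | hsB) | hsx
      · exfalso
        refine hno ⟨s, hsA, fun b hb => ?_⟩
        exact hS'tr s hs x (hsub (Set.mem_insert x B)) b
          (hsub (Set.mem_insert_of_mem x hb)) (hAx s hsA) (hxB' b hb)
      · exact Set.mem_insert_of_mem x hsB
      · rw [Set.mem_singleton_iff] at hsx
        exact hsx ▸ Set.mem_insert x B
end

section
/- Let T = (V, ≻) be a tournament with top cycle C. Then the Copeland set of T equals the Copeland set of the subtournament of T induced on C. -/
open scoped Classical

variable {V : Type*}

/-- `D` is a dominant set: it is nonempty and every vertex in `D` dominates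
every vertex outside `D`. -/
def IsDominant (r : V → V → Prop) (D : Set V) : Prop :=
  D.Nonempty ∧ ∀ x ∈ D, ∀ y ∉ D, r x y

/-- `C` is the top cycle: the smallest dominant set. -/
def IsTopCycle (r : V → V → Prop) (C : Set V) : Prop :=
  IsDominant r C ∧ ∀ D : Set V, IsDominant r D → C ⊆ D

/-- The Copeland set of the subtournament induced on a ground set `W`: vertices of
`W` whose out-degree within `W` is maximum. For `W = Set.univ` this is the Copeland
set of the whole tournament. -/
noncomputable def copelandSetIn (r : V → V → Prop) (W : Set V) : Set V :=
  {v | v ∈ W ∧ ∀ w ∈ W, {u ∈ W | r w u}.ncard ≤ {u ∈ W | r v u}.ncard}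

/-- the Copeland set of a tournament equals the Copeland set of the
subtournament induced on its top cycle. -/
theorem copeland_eq_copeland_of_topCycle [Fintype V] (r : V → V → Prop)
    (hT : IsTournament r) (C : Set V) (hC : IsTopCycle r C) :
    copelandSetIn r Set.univ = copelandSetIn r C := by
  obtain ⟨⟨hCne, hdom⟩, -⟩ := hC
  set k := Cᶜ.ncard with hk
  -- out-degree inside C plus k for members of C
  have hsum : ∀ v ∈ C, {u | r v u}.ncard = {u ∈ C | r v u}.ncard + k := by
    intro v hv
    have hEq : {u | r v u} = {u ∈ C | r v u} ∪ Cᶜ := by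
      ext u
      simp only [Set.mem_setOf_eq, Set.mem_union, Set.mem_compl_iff]
      constructor
      · intro h
        by_cases hu : u ∈ C
        · exact Or.inl ⟨hu, h⟩
        · exact Or.inr hu
      · rintro (⟨_, h⟩ | h)
        · exact h
        · exact hdom v hv u h
    have hdisj : Disjoint {u ∈ C | r v u} Cᶜ :=
      Set.disjoint_left.mpr fun u hu hu' => hu' hu.1
    rw [hEq, Set.ncard_union_eq hdisj (Set.toFinite _) (Set.toFinite _)]
  -- out-degree of vertices outside C is < k
  have hout : ∀ v, v ∉ C → {u | r v u}.ncard < k := by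
    intro v hv
    have hsub : {u | r v u} ⊆ Cᶜ \ {v} := by
      intro u hu
      have hru : r v u := hu
      have hne : u ≠ v := fun h => hT.1 v (h ▸ hru)
      refine ⟨fun huC => ?_, hne⟩
      have : r u v := hdom u huC v hv
      exact ((hT.2 u v hne).mp this) hru
    calc {u | r v u}.ncard ≤ (Cᶜ \ {v}).ncard :=
          Set.ncard_le_ncard hsub (Set.toFinite _)
      _ < Cᶜ.ncard := Set.ncard_diff_singleton_lt_of_mem hv (Set.toFinite _)
  ext v
  simp only [copelandSetIn, Set.mem_setOf_eq, Set.mem_univ, true_and]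
  constructor
  · intro hmax
    have hvC : v ∈ C := by
      by_contra hv
      obtain ⟨c, hc⟩ := hCne
      have h1 : {u | r v u}.ncard < k := hout v hv
      have h2 : k ≤ {u | r c u}.ncard := by
        rw [hsum c hc]; omega
      have := hmax c trivial
      omega
    refine ⟨hvC, fun w hw => ?_⟩
    have := hmax w trivial
    rw [hsum v hvC, hsum w hw] at this
    omega
  · rintro ⟨hvC, hmax⟩
    intro w _
    rw [hsum v hvC]
    by_cases hw : w ∈ C
    · rw [hsum w hw]
      exact Nat.add_le_add_right (hmax w hw) k
    · have h1 := hout w hw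
      omega
end

section
/- Let T = (V, ≻) be a tournament with top cycle C. Then the uncovered set of T equals the uncovered set of the subtournament of T induced on C. -/
open scoped Classical

variable {V : Type*}

/-- The uncovered set of the subtournament induced on a ground set `W`: vertices of
`W` not covered (within `W`) by any vertex of `W`. For `W = Set.univ` this is the
uncovered set of the whole tournament. -/
def uncoveredSetIn (r : V → V → Prop) (W : Set V) : Set V :=
  {v | v ∈ W ∧ ∀ u ∈ W, ¬ (r u v ∧ ∀ w ∈ W, r v w → r u w)}

/-- the uncovered set of a tournament equals the uncovered set of the
subtournament induced on its top cycle. -/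
theorem uncovered_eq_uncovered_of_topCycle [Fintype V] (r : V → V → Prop)
    (hT : IsTournament r) (C : Set V) (hC : IsTopCycle r C) :
    uncoveredSetIn r Set.univ = uncoveredSetIn r C := by
  obtain ⟨⟨⟨c, hc⟩, hdom⟩, hmin⟩ := hC
  have hirr := hT.1
  ext v
  simp only [uncoveredSetIn, Set.mem_setOf_eq, Set.mem_univ, true_and]
  constructor
  · intro hv
    have hvC : v ∈ C := by
      by_contra hvC
      refine hv c trivial ⟨hdom c hc v hvC, fun w _ hvw => ?_⟩
      apply hdom c hc
      intro hwC
      have hwv := hdom w hwC v hvC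
      have hne : v ≠ w := fun h => hirr v (h ▸ hvw)
      exact ((hT.2 v w hne).mp hvw) hwv
    refine ⟨hvC, fun u huC hcov => hv u trivial ⟨hcov.1, fun w _ hvw => ?_⟩⟩
    by_cases hwC : w ∈ C
    · exact hcov.2 w hwC hvw
    · exact hdom u huC w hwC
  · rintro ⟨hvC, hunc⟩ u _ ⟨huv, hcov⟩
    have huC : u ∈ C := by
      by_contra huC
      have hvu := hdom v hvC u huC
      have hne : u ≠ v := fun h => hirr v (h ▸ huv)
      exact ((hT.2 u v hne).mp huv) hvu
    exact hunc u huC ⟨huv, fun w hwC hvw => hcov w trivial hvw⟩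
end

section
/- Let T = (V, ≻) be a tournament with top cycle C. Then the Banks set of T equals the Banks set of the subtournament of T induced on C. -/
open scoped Classical

variable {V : Type*}

/-!
A dominant set `D` beats every vertex outside it, so a transitive subset of `D` can be stacked on
top of the part of any transitive set lying outside `D`. Consequently a maximal transitive set `S`
of the whole tournament meets `D`, its maximum lies in `D`, and `S ∩ D` is maximal transitive in
`D`. Conversely, a maximal transitive `S ⊆ D` extends to a maximal transitive `T` of the whole
tournament with `T ∩ D = S`, and the maximum of `T`, lying in `D`, is the maximum of `S`. Hence the
Banks set is the same for every dominant set, in particular for the top cycle.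
-/

open Set

variable {r : V → V → Prop}

namespace IsTournament

theorem asymm (hT : IsTournament r) ⦃u v : V⦄ (h : r u v) : ¬ r v u := by
  rcases eq_or_ne u v with rfl | huv
  · exact absurd h (hT.1 u)
  · exact (hT.2 u v huv).1 h

theorem exists_max_of_transOn [Finite V] (hT : IsTournament r) {S : Set V} (hS : TransOn r S)
    (hne : S.Nonempty) : ∃ m ∈ S, ∀ s ∈ S, s ≠ m → r m s := by
  let beats : V → V → Prop := fun a b => a ∈ S ∧ b ∈ S ∧ r a b
  have : IsTrans V beats :=
    ⟨fun a b c ⟨ha, hb, hab⟩ ⟨_, hc, hbc⟩ => ⟨ha, hc, hS a ha b hb c hc hab hbc⟩⟩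
  have : Std.Irrefl beats := ⟨fun a h => hT.1 a h.2.2⟩
  obtain ⟨m, hmS, hm⟩ := (Finite.wellFounded_of_trans_of_irrefl beats).has_min S hne
  exact ⟨m, hmS, fun s hs hsm => (hT.2 m s hsm.symm).2 fun hsm' => hm s hs ⟨hs, hmS, hsm'⟩⟩

theorem eq_of_max_of_max (hT : IsTournament r) {S : Set V} {m m' : V} (hmS : m ∈ S)
    (hm : ∀ s ∈ S, s ≠ m → r m s) (hm'S : m' ∈ S) (hm' : ∀ s ∈ S, s ≠ m' → r m' s) :
    m = m' := by
  by_contra hne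
  exact hT.asymm (hm m' hm'S (Ne.symm hne)) (hm' m hmS hne)

end IsTournament

theorem TransOn.mono {S T : Set V} (hS : TransOn r S) (hTS : T ⊆ S) : TransOn r T :=
  fun a ha b hb c hc => hS a (hTS ha) b (hTS hb) c (hTS hc)

theorem transOn_singleton (r : V → V → Prop) (c : V) : TransOn r {c} := by
  rintro a rfl b rfl d rfl hab -
  exact hab

theorem TransOn.union_of_forall {B E : Set V} (hasymm : ∀ ⦃u v⦄, r u v → ¬ r v u)
    (hB : TransOn r B) (hE : TransOn r E) (hBE : ∀ b ∈ B, ∀ e ∈ E, r b e) :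
    TransOn r (B ∪ E) := by
  intro x hx y hy z hz hxy hyz
  rcases hx with hx | hx <;> rcases hy with hy | hy <;> rcases hz with hz | hz
  · exact hB x hx y hy z hz hxy hyz
  · exact hBE x hx z hz
  · exact absurd (hBE z hz y hy) (hasymm hyz)
  · exact hBE x hx z hz
  · exact absurd (hBE y hy x hx) (hasymm hxy)
  · exact absurd (hBE y hy x hx) (hasymm hxy)
  · exact absurd (hBE z hz y hy) (hasymm hyz)
  · exact hE x hx y hy z hz hxy hyz

theorem mem_banksSetIn_iff {W : Set V} {m : V} :
    m ∈ banksSetIn r W ↔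
      ∃ S, Maximal (fun S => S ⊆ W ∧ TransOn r S) S ∧ m ∈ S ∧ ∀ s ∈ S, s ≠ m → r m s := by
  simp only [banksSetIn, mem_ofPred_eq, maximal_subset_iff, and_imp]
  constructor
  · rintro ⟨S, hSW, hS, hmS, hm, hmax⟩
    exact ⟨S, ⟨⟨hSW, hS⟩, fun T hTW hT hST => hmax T hTW hT hST⟩, hmS, hm⟩
  · rintro ⟨S, ⟨⟨hSW, hS⟩, hmax⟩, hmS, hm⟩
    exact ⟨S, hSW, hS, hmS, hm, fun T hTW hT hST => hmax hTW hT hST⟩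

section Dominant

variable {D : Set V}

theorem transOn_union_of_isDominant (hT : IsTournament r) (hD : IsDominant r D) {A B : Set V}
    (hA : TransOn r A) (hB : TransOn r B) (hBD : B ⊆ D) (hAD : A ∩ D ⊆ B) :
    TransOn r (A ∪ B) := by
  have hstack : TransOn r (B ∪ A \ D) :=
    hB.union_of_forall hT.asymm (hA.mono sdiff_subset) fun b hb e he => hD.2 b (hBD hb) e he.2
  refine hstack.mono ?_
  rintro x (hxA | hxB)
  · by_cases hxD : x ∈ D
    exacts [Or.inl (hAD ⟨hxA, hxD⟩), Or.inr ⟨hxA, hxD⟩]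
  · exact Or.inl hxB

theorem maximal_inter_of_isDominant (hT : IsTournament r) (hD : IsDominant r D) {S : Set V}
    (hS : Maximal (TransOn r) S) : Maximal (fun T => T ⊆ D ∧ TransOn r T) (S ∩ D) := by
  refine ⟨⟨inter_subset_right, hS.1.mono inter_subset_left⟩, fun T ⟨hTD, hTtrans⟩ hST => ?_⟩
  have hST' : S ∪ T ⊆ S :=
    hS.2 (transOn_union_of_isDominant hT hD hS.1 hTtrans hTD hST) subset_union_left
  exact subset_inter (subset_union_right.trans hST') hTD

theorem max_mem_of_isDominant (hT : IsTournament r) (hD : IsDominant r D) {S : Set V}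
    (hS : Maximal (TransOn r) S) {m : V} (hm : ∀ s ∈ S, s ≠ m → r m s) : m ∈ D := by
  by_contra hmD
  obtain ⟨s, hsS, hsD⟩ : (S ∩ D).Nonempty := by
    by_contra hSD
    obtain ⟨c, hc⟩ := hD.1
    have hSc : TransOn r (S ∪ {c}) :=
      transOn_union_of_isDominant hT hD hS.1 (transOn_singleton r c) (singleton_subset_iff.2 hc)
        (by simp [not_nonempty_iff_eq_empty.1 hSD])
    exact hSD ⟨c, hS.2 hSc subset_union_left (mem_union_right S rfl), hc⟩
  exact hT.asymm (hm s hsS (ne_of_mem_of_not_mem hsD hmD)) (hD.2 s hsD m hmD)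

theorem banksSetIn_univ_eq_of_isDominant [Finite V] (hT : IsTournament r) (hD : IsDominant r D) :
    banksSetIn r univ = banksSetIn r D := by
  ext m
  simp only [mem_banksSetIn_iff, subset_univ, true_and]
  constructor
  · rintro ⟨S, hS, hmS, hm⟩
    exact ⟨S ∩ D, maximal_inter_of_isDominant hT hD hS,
      ⟨hmS, max_mem_of_isDominant hT hD hS hm⟩, fun s hs hsm => hm s hs.1 hsm⟩
  · rintro ⟨S, hS, hmS, hm⟩
    obtain ⟨T, hST, hTmax⟩ := Finite.exists_le_maximal hS.1.2
    have hTD : T ∩ D = S :=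
      hS.eq_of_superset (maximal_inter_of_isDominant hT hD hTmax).1 (subset_inter hST hS.1.1)
    obtain ⟨m', hm'T, hm'⟩ := hT.exists_max_of_transOn hTmax.1 ⟨m, hST hmS⟩
    have hm'S : m' ∈ S := hTD ▸ ⟨hm'T, max_mem_of_isDominant hT hD hTmax hm'⟩
    obtain rfl : m' = m := hT.eq_of_max_of_max hm'S (fun s hs => hm' s (hST hs)) hmS hm
    exact ⟨T, hTmax, hm'T, hm'⟩

end Dominant

/-- the Banks set of a tournament equals the Banks set of the
subtournament induced on its top cycle. -/
theorem banks_eq_banks_of_topCycle [Fintype V] (r : V → V → Prop)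
    (hT : IsTournament r) (C : Set V) (hC : IsTopCycle r C) :
    banksSetIn r Set.univ = banksSetIn r C :=
  banksSetIn_univ_eq_of_isDominant hT hC.1
end

section
/- Let T = (V, ≻) be a tournament with top cycle C. Then every maximal lottery p of T satisfies p(v) = 0 for every v ∈ V∖C; in particular, the bipartisan set of T is contained in C. -/
open scoped Classical

variable {V : Type*}

/-- every maximal lottery of a tournament vanishes outside the top
cycle `C`; in particular the bipartisan set is contained in `C`. -/
theorem bipartisan_subset_topCycle [Fintype V] (r : V → V → Prop)
    (hT : IsTournament r) (C : Set V) (hC : IsTopCycle r C) :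
    (∀ p : V → ℝ, IsMaximalLottery r p → ∀ v, v ∉ C → p v = 0) ∧
    bipartisanSet r ⊆ C := by
  classical
  obtain ⟨⟨hCne, hdom⟩, -⟩ := hC
  have hanti : ∀ a b, skew r a b = - skew r b a := by
    intro a b
    by_cases h : a = b
    · subst h; simp [skew, hT.1 a]
    · by_cases hab : r a b
      · have hnba : ¬ r b a := (hT.2 a b h).mp hab
        simp [skew, hab, hnba]
      · by_cases hba : r b a
        · simp [skew, hab, hba]
        · simp [skew, hab, hba]
  have hskew_out : ∀ a ∉ C, ∀ b ∈ C, skew r a b = -1 := by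
    intro a ha b hb
    have hne : b ≠ a := fun h => ha (h ▸ hb)
    have hba : r b a := hdom b hb a ha
    have hnab : ¬ r a b := by
      intro hab
      exact ((hT.2 b a hne).mp hba) hab
    simp [skew, hnab, hba]
  have key : ∀ p : V → ℝ, IsMaximalLottery r p → ∀ v, v ∉ C → p v = 0 := by
    intro p hp
    obtain ⟨hpos, hsum, hml⟩ := hp
    set Cf : Finset V := Finset.univ.filter (· ∈ C) with hCfdef
    set Df : Finset V := Finset.univ.filter (fun a => ¬ a ∈ C) with hDfdef
    have hmemC : ∀ a, a ∈ Cf ↔ a ∈ C := by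
      intro a; simp [hCfdef]
    have hmemD : ∀ a, a ∈ Df ↔ a ∉ C := by
      intro a; simp [hDfdef]
    set s : ℝ := ∑ b ∈ Cf, p b with hs
    set t : ℝ := ∑ b ∈ Df, p b with ht
    have hst : s + t = 1 := by
      rw [hs, ht, Finset.sum_filter_add_sum_filter_not Finset.univ (· ∈ C) p]
      exact hsum
    have hsnn : 0 ≤ s := Finset.sum_nonneg fun i _ => hpos i
    have htnn : 0 ≤ t := Finset.sum_nonneg fun i _ => hpos i
    -- the quadratic form over C vanishes
    have hQ : ∑ b ∈ Cf, ∑ a ∈ Cf, p b * (p a * skew r a b) = 0 := by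
      have h2 : (∑ b ∈ Cf, ∑ a ∈ Cf, p b * (p a * skew r a b))
          = - ∑ b ∈ Cf, ∑ a ∈ Cf, p b * (p a * skew r a b) := by
        conv_lhs => rw [Finset.sum_comm]
        rw [← Finset.sum_neg_distrib]
        refine Finset.sum_congr rfl fun a _ => ?_
        rw [← Finset.sum_neg_distrib]
        refine Finset.sum_congr rfl fun b _ => ?_
        rw [hanti a b]; ring
      linarith
    -- for each b ∈ C, inner sum over D is -t
    have hinner : ∀ b ∈ Cf, ∑ a ∈ Df, p a * skew r a b = -t := by
      intro b hb
      rw [ht, ← Finset.sum_neg_distrib]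
      refine Finset.sum_congr rfl fun a ha => ?_
      rw [hskew_out a ((hmemD a).mp ha) b ((hmemC b).mp hb)]
      ring
    -- main inequality
    have hmain : 0 ≤ ∑ b ∈ Cf, p b * ∑ a, p a * skew r a b :=
      Finset.sum_nonneg fun b _ => mul_nonneg (hpos b) (hml b)
    have hsplit : ∀ b, (∑ a, p a * skew r a b)
        = (∑ a ∈ Cf, p a * skew r a b) + ∑ a ∈ Df, p a * skew r a b := by
      intro b
      rw [hCfdef, hDfdef,
        Finset.sum_filter_add_sum_filter_not Finset.univ (· ∈ C) (fun a => p a * skew r a b)]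
    have hval : ∑ b ∈ Cf, p b * ∑ a, p a * skew r a b = - (s * t) := by
      calc ∑ b ∈ Cf, p b * ∑ a, p a * skew r a b
          = ∑ b ∈ Cf, (∑ a ∈ Cf, p b * (p a * skew r a b) + p b * (-t)) := by
            refine Finset.sum_congr rfl fun b hb => ?_
            rw [hsplit b, mul_add, Finset.mul_sum, hinner b hb]
        _ = (∑ b ∈ Cf, ∑ a ∈ Cf, p b * (p a * skew r a b)) + ∑ b ∈ Cf, p b * (-t) := by
            rw [Finset.sum_add_distrib]
        _ = - (s * t) := by
            rw [hQ, ← Finset.sum_mul, ← hs]; ring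
    have hst0 : s * t ≤ 0 := by rw [hval] at hmain; linarith
    have hor : s = 0 ∨ t = 0 := by
      rcases mul_eq_zero.mp (le_antisymm hst0 (mul_nonneg hsnn htnn)) with h | h
      · exact Or.inl h
      · exact Or.inr h
    have ht0 : t = 0 := by
      rcases hor with h | h
      · exfalso
        have ht1 : t = 1 := by linarith
        obtain ⟨b, hb⟩ := hCne
        have h1 : ∑ a ∈ Cf, p a * skew r a b = 0 := by
          refine Finset.sum_eq_zero fun a ha => ?_
          have : p a = 0 := by
            have := Finset.sum_eq_zero_iff_of_nonneg (fun i _ => hpos i) |>.mp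
              (by rw [← hs]; exact h) a ha
            exact this
          rw [this]; ring
        have h2 : ∑ a ∈ Df, p a * skew r a b = -t :=
          hinner b ((hmemC b).mpr hb)
        have := hml b
        rw [hsplit b, h1, h2, ht1] at this
        linarith
      · exact h
    intro v hv
    exact Finset.sum_eq_zero_iff_of_nonneg (fun i _ => hpos i) |>.mp
      (by rw [← ht]; exact ht0) v ((hmemD v).mpr hv)
  refine ⟨key, ?_⟩
  intro a ⟨p, hp, hpa⟩
  by_contra ha
  exact absurd (key p hp a ha) (by linarith)
end
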